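/- Let Ω ⊂ X be int-nearly convex and let T : X → Y be a surjective continuous linear operator which is an open mapping. Then T(Ω) is int-nearly convex and int(T(Ω)) = T(int(Ω)). -/

import Mathlib

variable {X Y : Type*} [AddCommGroup X] [Module ℝ X] [TopologicalSpace X]
  [IsTopologicalAddGroup X] [ContinuousSMul ℝ X]
  [AddCommGroup Y] [Module ℝ Y] [TopologicalSpace Y]
  [IsTopologicalAddGroup Y] [ContinuousSMul ℝ Y]

def IntNearlyConvex {Z : Type*} [AddCommGroup Z] [Module ℝ Z] [TopologicalSpace Z]
    (Ω : Set Z) : Prop :=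
  ∃ C : Set Z, Convex ℝ C ∧ (interior C).Nonempty ∧ C ⊆ Ω ∧ Ω ⊆ closure C

/-! Both claims reduce to the convex core `C`: a set squeezed between `C` and `closure C` has
the interior of `C`, and since `C` lies in the closure of the open convex set `T '' interior C`,
the interior of `T '' C` is `T '' interior C`. -/

theorem Convex.interior_eq_of_subset_of_subset_closure {C Ω : Set X} (hC : Convex ℝ C)
    (hCint : (interior C).Nonempty) (hCΩ : C ⊆ Ω) (hΩC : Ω ⊆ closure C) :
    interior Ω = interior C :=
  subset_antisymm
    ((interior_mono hΩC).trans (hC.interior_closure_eq_interior_of_nonempty_interior hCint).le)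
    (interior_mono hCΩ)

theorem Convex.interior_image_eq_image_interior {C : Set X} (hC : Convex ℝ C)
    (hCint : (interior C).Nonempty) (T : X →L[ℝ] Y) (hopen : IsOpenMap T) :
    interior (T '' C) = T '' interior C := by
  set U := T '' interior C
  have hU_open : IsOpen U := hopen _ isOpen_interior
  have hU_conv : Convex ℝ U := hC.interior.linear_image T.toLinearMap
  have hCU : T '' C ⊆ closure U :=
    calc T '' C ⊆ T '' closure (interior C) := by
          rw [hC.closure_interior_eq_closure_of_nonempty_interior hCint]
          exact Set.image_mono subset_closure
      _ ⊆ closure U := image_closure_subset_closure_image T.continuous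
  refine subset_antisymm ?_ (interior_maximal (Set.image_mono interior_subset) hU_open)
  calc interior (T '' C) ⊆ interior (closure U) := interior_mono hCU
    _ = interior U := by
        refine hU_conv.interior_closure_eq_interior_of_nonempty_interior ?_
        rw [hU_open.interior_eq]
        exact hCint.image T
    _ = U := hU_open.interior_eq

theorem stmt3_general (Ω : Set X) (hΩ : IntNearlyConvex Ω) (T : X →L[ℝ] Y)
    (hopen : IsOpenMap T) :
    IntNearlyConvex (T '' Ω) ∧ interior (T '' Ω) = T '' interior Ω := by
  obtain ⟨C, hC, hCint, hCΩ, hΩC⟩ := hΩ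
  have hTC : Convex ℝ (T '' C) := hC.linear_image T.toLinearMap
  have hTCint : (interior (T '' C)).Nonempty := by
    rw [hC.interior_image_eq_image_interior hCint T hopen]
    exact hCint.image T
  have hTCΩ : T '' C ⊆ T '' Ω := Set.image_mono hCΩ
  have hTΩC : T '' Ω ⊆ closure (T '' C) :=
    (Set.image_mono hΩC).trans (image_closure_subset_closure_image T.continuous)
  refine ⟨⟨T '' C, hTC, hTCint, hTCΩ, hTΩC⟩, ?_⟩
  rw [hTC.interior_eq_of_subset_of_subset_closure hTCint hTCΩ hTΩC,
    hC.interior_image_eq_image_interior hCint T hopen,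
    hC.interior_eq_of_subset_of_subset_closure hCint hCΩ hΩC]

theorem stmt3 (Ω : Set X) (hΩ : IntNearlyConvex Ω) (T : X →L[ℝ] Y)
    (hsurj : Function.Surjective T) (hopen : IsOpenMap T) :
    IntNearlyConvex (T '' Ω) ∧ interior (T '' Ω) = T '' interior Ω :=
  stmt3_general Ω hΩ T hopen
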